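/- Let m ≥ 1, let M, N ⊆ [m] with M ⊊ [m] and |M|+|N| ≥ 1, and let D = aΔ_M^c + cΔ_N ⊆ E^m. Then the linear left-E-code C^L_D has length |D| = (2^m−2^{|M|})·2^{|N|} and size |C^L_D| = 2^{2m}, and the multiset {wt_Lee(c^L_D(v)) : v ∈ E^m} (with multiplicity over all 2^{2m} elements v ∈ E^m) consists of: 2^{m+|N|} with multiplicity 2^{2m−2|M|}−2^{m−|M|+1}+1; 2^{m+|N|−1} with multiplicity 2^{m−|M|+1}−2; 2^{m+|N|}−2^{|M|+|N|} with multiplicity 2^{2m}+2^{2m−2|M|}−2^{2m−|M|+1}; 2^{m+|N|}−2^{|M|+|N|−1} with multiplicity 2^{2m−|M|+1}−2^{2m−2|M|+1}−2^{m+1}+2^{m−|M|+1}; 2^{m+|N|−1}−2^{|M|+|N|−1} with multiplicity 2^{m+1}−2^{m−|M|+1}; and 0 with multiplicity 1. -/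

import Mathlib

open Finset

/-- The simplicial complex `Δ_M ⊆ 𝔽₂^m` generated by `M ⊆ [m]`:
all vectors whose support is contained in `M`. -/
def deltaC {m : ℕ} (M : Finset (Fin m)) : Finset (Fin m → ZMod 2) :=
  Finset.univ.filter (fun w => ∀ i, w i ≠ 0 → i ∈ M)

/-- Dot product over `𝔽₂`. -/
def dotp {m : ℕ} (x y : Fin m → ZMod 2) : ZMod 2 := ∑ i, x i * y i

/-- The Gray map on a single element `a·s + c·t ↔ (s, t)` of `E = 𝔽₂ × 𝔽₂`:
`Φ(as + ct) = (t, s + t)`. -/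
def grayPair (e : ZMod 2 × ZMod 2) : Fin 2 → ZMod 2 := ![e.2, e.1 + e.2]

/-- The left codeword `c^L_D(v)` for `v = aα + cβ ↔ (α, β)`:
its coordinate at `d = (t₁, t₂) ∈ D` is `a(α·t₁) + c(β·t₁) ↔ (α·t₁, β·t₁)`. -/
def cwL {m : ℕ} (Ds : Finset ((Fin m → ZMod 2) × (Fin m → ZMod 2)))
    (v : (Fin m → ZMod 2) × (Fin m → ZMod 2)) :
    {d // d ∈ Ds} → ZMod 2 × ZMod 2 :=
  fun d => (dotp v.1 d.1.1, dotp v.2 d.1.1)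

/-- The Gray image `Φ(c^L_D(v)) ∈ 𝔽₂^{2|D|}` of the left codeword `c^L_D(v)`;
its Hamming weight (`hammingNorm`) is the Lee weight of `c^L_D(v)`. -/
def gcwL {m : ℕ} (Ds : Finset ((Fin m → ZMod 2) × (Fin m → ZMod 2)))
    (v : (Fin m → ZMod 2) × (Fin m → ZMod 2)) :
    {d // d ∈ Ds} × Fin 2 → ZMod 2 :=
  fun x => grayPair (cwL Ds v x.1) x.2

/-- The right codeword `c^R_D(v)` for `v = aα + cβ ↔ (α, β)`:
its coordinate at `d = (t₁, t₂) ∈ D` is `a(t₁·α) + c(t₂·α) ↔ (t₁·α, t₂·α)`. -/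
def cwR {m : ℕ} (Ds : Finset ((Fin m → ZMod 2) × (Fin m → ZMod 2)))
    (v : (Fin m → ZMod 2) × (Fin m → ZMod 2)) :
    {d // d ∈ Ds} → ZMod 2 × ZMod 2 :=
  fun d => (dotp d.1.1 v.1, dotp d.1.2 v.1)

/-- The Gray image `Φ(c^R_D(v)) ∈ 𝔽₂^{2|D|}` of the right codeword `c^R_D(v)`;
its Hamming weight (`hammingNorm`) is the Lee weight of `c^R_D(v)`. -/
def gcwR {m : ℕ} (Ds : Finset ((Fin m → ZMod 2) × (Fin m → ZMod 2)))
    (v : (Fin m → ZMod 2) × (Fin m → ZMod 2)) :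
    {d // d ∈ Ds} × Fin 2 → ZMod 2 :=
  fun x => grayPair (cwR Ds v x.1) x.2

/-!
Write `v = aα + cβ`. The Gray image of the coordinate of `c^L_D(v)` at `(t₁, t₂)` is
`(β · t₁, (α + β) · t₁)`, so `wt_Lee(c^L_D(v)) = 2^|N| (w β + w (α + β))`, where
`w x = #{t ∉ Δ_M | x · t ≠ 0}`. Since `(α, β) ↦ (β, α + β)` is a bijection, the weight
distribution is that of `2^|N| (w x + w y)` over all pairs `(x, y)`. Now `w x` is the difference
of the number of `t` with `x · t ≠ 0` in `𝔽₂^m` and in `Δ_M`, and a linear form that does not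
vanish on a coordinate subspace is nonzero on exactly half of it; so `w` takes only the values
`0` (at `x = 0`), `2^(m-1)` (for `x ≠ 0` vanishing on `M`) and `2^(m-1) - 2^(|M|-1)` (otherwise).
Finally `v ↦ c^L_D(v)` is injective because `Δ_M^c` spans `𝔽₂^m` when `M ≠ [m]`.
-/

theorem Finset.card_filter_eq_card_filter_not_of_involutive {α : Type*} (s : Finset α)
    (p : α → Prop) [DecidablePred p] {f : α → α} (hf : Function.Involutive f)
    (hs : ∀ x ∈ s, f x ∈ s) (hp : ∀ x, p (f x) ↔ ¬ p x) :
    #{x ∈ s | p x} = #{x ∈ s | ¬ p x} := by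
  apply Finset.card_nbij' f f <;> intro x hx <;> simp_all [hf x]

namespace Multiset

theorem map_product_map {α β γ δ : Type*} (s : Multiset α) (t : Multiset β) (f : α → γ)
    (g : β → δ) : s.map f ×ˢ t.map g = (s ×ˢ t).map (Prod.map f g) := by
  induction s using Multiset.induction_on with
  | empty => simp
  | cons a s ih => simp [cons_product, ih, Multiset.map_map]

theorem replicate_product_replicate {α β : Type*} (a b : ℕ) (x : α) (y : β) :
    replicate a x ×ˢ replicate b y = replicate (a * b) (x, y) :=
  eq_replicate.2 ⟨by simp [card_product], fun p hp => by
    rw [mem_product] at hp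
    exact Prod.ext (eq_of_mem_replicate hp.1) (eq_of_mem_replicate hp.2)⟩

theorem replicate_congr {α : Type*} {c c' : ℕ} {v v' : α} (hc : c = c') (hv : c ≠ 0 → v = v') :
    replicate c v = replicate c' v' := by
  subst hc
  rcases eq_or_ne c 0 with h | h
  · simp [h]
  · rw [hv h]

end Multiset

open Multiset in
theorem map_mul_add_product_three (n A B a b : ℕ) :
    let W := replicate 1 0 + replicate a A + replicate b B
    (W ×ˢ W).map (fun p => n * (p.1 + p.2)) =
      replicate (a * a) (n * (A + A)) + replicate (2 * a) (n * A) +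
        replicate (b * b) (n * (B + B)) + replicate (2 * a * b) (n * (A + B)) +
        replicate (2 * b) (n * B) + replicate 1 0 := by
  simp only [add_product, product_add, replicate_product_replicate, Multiset.map_add,
    map_replicate, one_mul, mul_one, add_zero, zero_add, mul_zero, two_mul, add_mul,
    replicate_add, mul_comm b a, add_comm B A]
  abel

/-- The left sides count pairs of vectors by weight class (`2 ^ (m - k) - 1` nonzero vectors
vanish on `M`, `2 ^ (m - k) * (2 ^ k - 1)` do not); the right sides are the multiplicities as
written in the theorem. -/
theorem lee_weight_multiplicities {k m : ℕ} (hkm : k < m) :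
    (2 ^ (m - k) - 1) * (2 ^ (m - k) - 1) = 2 ^ (2 * m - 2 * k) - 2 ^ (m - k + 1) + 1 ∧
    2 * (2 ^ (m - k) - 1) = 2 ^ (m - k + 1) - 2 ∧
    2 ^ (m - k) * (2 ^ k - 1) * (2 ^ (m - k) * (2 ^ k - 1)) =
      2 ^ (2 * m) + 2 ^ (2 * m - 2 * k) - 2 ^ (2 * m - k + 1) ∧
    2 * (2 ^ (m - k) - 1) * (2 ^ (m - k) * (2 ^ k - 1)) =
      2 ^ (2 * m - k + 1) + 2 ^ (m - k + 1) - 2 ^ (2 * m - 2 * k + 1) - 2 ^ (m + 1) ∧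
    2 * (2 ^ (m - k) * (2 ^ k - 1)) = 2 ^ (m + 1) - 2 ^ (m - k + 1) := by
  obtain ⟨r, rfl⟩ := Nat.exists_eq_add_of_lt hkm
  rw [show k + r + 1 - k = r + 1 by omega,
    show 2 * (k + r + 1) - k + 1 = k + (r + 1) + (r + 1) + 1 by omega,
    show 2 * (k + r + 1) - 2 * k + 1 = (r + 1) + (r + 1) + 1 by omega,
    show 2 * (k + r + 1) - 2 * k = (r + 1) + (r + 1) by omega,
    show 2 * (k + r + 1) = k + (r + 1) + k + (r + 1) by omega]
  obtain ⟨p, hp⟩ := Nat.exists_eq_add_of_le' (Nat.one_le_two_pow (n := k))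
  obtain ⟨q, hq⟩ := Nat.exists_eq_add_of_le' (Nat.one_le_two_pow (n := r))
  simp only [pow_add, pow_one, hp, hq, Nat.add_sub_cancel,
    show (q + 1) * 2 - 1 = 2 * q + 1 by omega]
  refine ⟨?_, ?_, ?_, ?_, ?_⟩ <;> ring_nf <;> omega

theorem lee_weights {m : ℕ} (s : ℕ) (hm : 1 ≤ m) :
    2 ^ s * (2 ^ (m - 1) + 2 ^ (m - 1)) = 2 ^ (m + s) ∧ 2 ^ s * 2 ^ (m - 1) = 2 ^ (m + s - 1) := by
  obtain ⟨m, rfl⟩ := Nat.exists_eq_add_of_le' hm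
  simp only [show m + 1 + s - 1 = m + s by omega, Nat.add_sub_cancel, pow_succ, pow_add]
  constructor <;> ring

theorem lee_weights_of_pos {k m : ℕ} (s : ℕ) (hk : 1 ≤ k) (hkm : k ≤ m) :
    2 ^ s * ((2 ^ (m - 1) - 2 ^ (k - 1)) + (2 ^ (m - 1) - 2 ^ (k - 1))) =
      2 ^ (m + s) - 2 ^ (k + s) ∧
    2 ^ s * (2 ^ (m - 1) + (2 ^ (m - 1) - 2 ^ (k - 1))) = 2 ^ (m + s) - 2 ^ (k + s - 1) ∧
    2 ^ s * (2 ^ (m - 1) - 2 ^ (k - 1)) = 2 ^ (m + s - 1) - 2 ^ (k + s - 1) := by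
  obtain ⟨k, rfl⟩ := Nat.exists_eq_add_of_le' hk
  obtain ⟨r, rfl⟩ := Nat.exists_eq_add_of_le hkm
  obtain ⟨q, hq⟩ := Nat.exists_eq_add_of_le' (Nat.one_le_two_pow (n := r))
  simp only [show k + 1 + r - 1 = k + r by omega, show k + 1 + r + s = (k + r + s) + 1 by omega,
    show k + 1 + s = (k + s) + 1 by omega, pow_succ, pow_add, hq, mul_add, mul_one,
    Nat.add_sub_cancel]
  refine ⟨?_, ?_, ?_⟩ <;> ring_nf <;> omega

section

variable {m : ℕ}

theorem dotp_eq_dotProduct (x y : Fin m → ZMod 2) : dotp x y = x ⬝ᵥ y := rfl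

theorem mem_deltaC {M : Finset (Fin m)} {w : Fin m → ZMod 2} :
    w ∈ deltaC M ↔ ∀ i, w i ≠ 0 → i ∈ M := by
  simp [deltaC]

theorem mem_deltaC_compl {M : Finset (Fin m)} {w : Fin m → ZMod 2} :
    w ∈ deltaC Mᶜ ↔ ∀ i ∈ M, w i = 0 := by
  simp only [mem_deltaC, mem_compl]
  exact forall_congr' fun i => not_imp_not

theorem zero_mem_deltaC (M : Finset (Fin m)) : 0 ∈ deltaC M := by
  simp [mem_deltaC]

theorem deltaC_univ : deltaC (univ : Finset (Fin m)) = univ := by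
  simp [deltaC]

theorem deltaC_eq_piFinset (M : Finset (Fin m)) :
    deltaC M = Fintype.piFinset fun i => if i ∈ M then univ else {0} := by
  ext w
  simp only [mem_deltaC, Fintype.mem_piFinset]
  refine forall_congr' fun i => ?_
  split_ifs <;> simp [*]

theorem card_deltaC (M : Finset (Fin m)) : #(deltaC M) = 2 ^ #M := by
  simp [deltaC_eq_piFinset, apply_ite card, prod_ite_mem]

theorem eq_zero_of_forall_not_mem_deltaC_dotp_eq_zero {M : Finset (Fin m)} (hM : M ≠ univ)
    {x : Fin m → ZMod 2} (hx : ∀ t ∉ deltaC M, dotp x t = 0) : x = 0 := by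
  obtain ⟨j, hj⟩ : ∃ j, j ∉ M := by simpa [eq_univ_iff_forall] using hM
  have hxj : x j = 0 := by
    simpa [dotp_eq_dotProduct] using hx (Pi.single j 1) (by simpa [mem_deltaC] using ⟨j, by simp, hj⟩)
  funext i
  rcases eq_or_ne i j with rfl | hij
  · exact hxj
  · -- `e_i + e_j` lies outside `Δ_M` because its `j`-th coordinate is `1`
    have := hx (Pi.single i 1 + Pi.single j 1) (by
      simpa [mem_deltaC] using ⟨j, by simp [hij.symm], hj⟩)
    simpa [dotp_eq_dotProduct, dotProduct_add, hxj] using this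

def binWeight (D : Finset (Fin m → ZMod 2)) (x : Fin m → ZMod 2) : ℕ :=
  #{t ∈ D | dotp x t ≠ 0}

theorem binWeight_zero (D : Finset (Fin m → ZMod 2)) : binWeight D 0 = 0 := by
  simp [binWeight, dotp]

theorem binWeight_compl_add (D : Finset (Fin m → ZMod 2)) (x : Fin m → ZMod 2) :
    binWeight Dᶜ x + binWeight D x = binWeight univ x := by
  rw [binWeight, binWeight, binWeight, ← card_union_of_disjoint
    (disjoint_filter_filter disjoint_compl_left), ← filter_union, union_comm, union_compl]

theorem binWeight_deltaC_of_forall {M : Finset (Fin m)} {x : Fin m → ZMod 2}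
    (hx : ∀ i ∈ M, x i = 0) : binWeight (deltaC M) x = 0 := by
  refine card_eq_zero.2 (filter_eq_empty_iff.2 fun t ht => not_not.2 ?_)
  refine sum_eq_zero fun i _ => ?_
  by_cases hti : t i = 0
  · simp [hti]
  · simp [hx i (mem_deltaC.1 ht i hti)]

/-- Translation by `e_i` pairs off the `t ∈ Δ_M` with `x · t = 0` and those with `x · t = 1`. -/
theorem binWeight_deltaC_of_mem {M : Finset (Fin m)} {x : Fin m → ZMod 2} {i : Fin m}
    (hi : i ∈ M) (hx : x i ≠ 0) : binWeight (deltaC M) x = 2 ^ (#M - 1) := by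
  have hinv : Function.Involutive fun t : Fin m → ZMod 2 => t + Pi.single i 1 :=
    fun t => funext fun j => (by decide : ∀ a b : ZMod 2, a + b + b = a) (t j) _
  have hs : ∀ t ∈ deltaC M, t + Pi.single i 1 ∈ deltaC M := by
    intro t ht
    refine mem_deltaC.2 fun j hj => ?_
    by_cases htj : t j = 0
    · rcases eq_or_ne j i with rfl | hji
      · exact hi
      · simp [htj, hji] at hj
    · exact mem_deltaC.1 ht j htj
  have hp : ∀ t, dotp x (t + Pi.single i 1) ≠ 0 ↔ ¬ dotp x t ≠ 0 := by
    intro t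
    simp only [dotp_eq_dotProduct, dotProduct_add, dotProduct_single, mul_one]
    revert hx
    generalize x i = a
    generalize x ⬝ᵥ t = b
    revert a b; decide
  have hhalf := card_filter_eq_card_filter_not_of_involutive _ (fun t => dotp x t ≠ 0) hinv hs hp
  have htotal := card_filter_add_card_filter_not (s := deltaC M) (p := fun t => dotp x t ≠ 0)
  rw [card_deltaC, ← hhalf] at htotal
  have hM : #M = #M - 1 + 1 := (Nat.sub_add_cancel (card_pos.2 ⟨i, hi⟩)).symm
  rw [hM, pow_succ] at htotal
  rw [binWeight]
  omega

theorem binWeight_univ {x : Fin m → ZMod 2} (hx : x ≠ 0) : binWeight univ x = 2 ^ (m - 1) := by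
  obtain ⟨i, hi⟩ := Function.ne_iff.1 hx
  simpa [deltaC_univ] using binWeight_deltaC_of_mem (mem_univ i) hi

theorem binWeight_compl_deltaC_of_forall {M : Finset (Fin m)} {x : Fin m → ZMod 2} (hx0 : x ≠ 0)
    (hx : ∀ i ∈ M, x i = 0) : binWeight (deltaC M)ᶜ x = 2 ^ (m - 1) := by
  simpa [binWeight_deltaC_of_forall hx, binWeight_univ hx0] using binWeight_compl_add (deltaC M) x

theorem binWeight_compl_deltaC_of_mem {M : Finset (Fin m)} {x : Fin m → ZMod 2} {i : Fin m}
    (hi : i ∈ M) (hx : x i ≠ 0) : binWeight (deltaC M)ᶜ x = 2 ^ (m - 1) - 2 ^ (#M - 1) := by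
  have h := binWeight_compl_add (deltaC M) x
  rw [binWeight_deltaC_of_mem hi hx, binWeight_univ (fun h0 => hx (by simp [h0]))] at h
  omega

theorem map_binWeight_compl_deltaC (M : Finset (Fin m)) :
    (univ : Finset (Fin m → ZMod 2)).val.map (binWeight (deltaC M)ᶜ) =
      Multiset.replicate 1 0 + Multiset.replicate (2 ^ (m - #M) - 1) (2 ^ (m - 1)) +
        Multiset.replicate (2 ^ (m - #M) * (2 ^ #M - 1)) (2 ^ (m - 1) - 2 ^ (#M - 1)) := by
  set S := deltaC Mᶜ
  have hS : #S = 2 ^ (m - #M) := by rw [card_deltaC, card_compl, Fintype.card_fin]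
  have hSc : #Sᶜ = 2 ^ (m - #M) * (2 ^ #M - 1) := by
    rw [card_compl, hS, Fintype.card_fun, ZMod.card, Fintype.card_fin, Nat.mul_sub, mul_one,
      ← pow_add, Nat.sub_add_cancel (by simpa using M.card_le_univ)]
  have huniv : (univ : Finset (Fin m → ZMod 2)).val = 0 ::ₘ (S.erase 0).val + Sᶜ.val := by
    rw [erase_val, Multiset.cons_erase (zero_mem_deltaC _), ← union_compl S,
      ← disjUnion_eq_union S Sᶜ disjoint_compl_right]
    rfl
  rw [huniv, Multiset.map_add, Multiset.map_cons, binWeight_zero, ← Multiset.singleton_add,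
    ← Multiset.replicate_one]
  congr 2
  · refine Multiset.eq_replicate.2 ⟨?_, ?_⟩
    · rw [Multiset.card_map]
      exact (card_erase_of_mem (zero_mem_deltaC _)).trans (by rw [hS])
    · simp only [Multiset.mem_map, mem_val, mem_erase]
      rintro _ ⟨x, ⟨hx0, hxS⟩, rfl⟩
      exact binWeight_compl_deltaC_of_forall hx0 (mem_deltaC_compl.1 hxS)
  · refine Multiset.eq_replicate.2 ⟨by simp [hSc], ?_⟩
    simp only [Multiset.mem_map, mem_val, mem_compl, S, mem_deltaC_compl, not_forall]
    rintro _ ⟨x, ⟨i, hi, hxi⟩, rfl⟩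
    exact binWeight_compl_deltaC_of_mem hi hxi

theorem hammingNorm_gcwL_product (D₁ D₂ : Finset (Fin m → ZMod 2))
    (v : (Fin m → ZMod 2) × (Fin m → ZMod 2)) :
    hammingNorm (gcwL (D₁ ×ˢ D₂) v) = #D₂ * (binWeight D₁ v.2 + binWeight D₁ (v.1 + v.2)) := by
  have hcoord : ∀ d : {d // d ∈ D₁ ×ˢ D₂}, (∑ j : Fin 2, if gcwL _ v (d, j) ≠ 0 then 1 else 0) =
      (if dotp v.2 d.1.1 ≠ 0 then 1 else 0) + if dotp (v.1 + v.2) d.1.1 ≠ 0 then 1 else 0 := by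
    intro d
    rw [Fin.sum_univ_two, dotp_eq_dotProduct (v.1 + v.2), add_dotProduct]
    rfl
  rw [hammingNorm, card_filter, Fintype.sum_prod_type, Fintype.sum_congr _ _ hcoord,
    sum_coe_sort (D₁ ×ˢ D₂) (fun d => (if dotp v.2 d.1 ≠ 0 then 1 else 0) +
      if dotp (v.1 + v.2) d.1 ≠ 0 then 1 else 0), sum_product' (f := fun t₁ _ =>
        (if dotp v.2 t₁ ≠ 0 then 1 else 0) + if dotp (v.1 + v.2) t₁ ≠ 0 then 1 else 0)]
  simp only [sum_const, smul_eq_mul]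
  rw [← mul_sum, sum_add_distrib, sum_boole, sum_boole, Nat.cast_id, Nat.cast_id]
  rfl

theorem map_hammingNorm_gcwL_product (D₁ D₂ : Finset (Fin m → ZMod 2)) :
    (univ : Finset ((Fin m → ZMod 2) × (Fin m → ZMod 2))).val.map
        (fun v => hammingNorm (gcwL (D₁ ×ˢ D₂) v)) =
      (univ.val.map (binWeight D₁) ×ˢ univ.val.map (binWeight D₁)).map
        (fun p => #D₂ * (p.1 + p.2)) := by
  let shear : (Fin m → ZMod 2) × (Fin m → ZMod 2) ≃ (Fin m → ZMod 2) × (Fin m → ZMod 2) :=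
    (Equiv.prodComm _ _).trans (Equiv.prodShear (Equiv.refl _) fun β => Equiv.addRight β)
  calc _ = (univ.val.map shear).map fun p => #D₂ * (binWeight D₁ p.1 + binWeight D₁ p.2) := by
        rw [Multiset.map_map]
        exact Multiset.map_congr rfl fun v _ => hammingNorm_gcwL_product D₁ D₂ v
    _ = _ := by
        rw [Multiset.map_univ_val_equiv, Multiset.map_product_map, Multiset.map_map,
          ← univ_product_univ, product_val]
        rfl

theorem cwL_injective {M : Finset (Fin m)} (hM : M ≠ univ) {D₂ : Finset (Fin m → ZMod 2)}
    (hD₂ : D₂.Nonempty) : Function.Injective (cwL ((deltaC M)ᶜ ×ˢ D₂)) := by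
  obtain ⟨t₂, ht₂⟩ := hD₂
  intro v v' h
  have hcoord : ∀ t ∉ deltaC M, dotp v.1 t = dotp v'.1 t ∧ dotp v.2 t = dotp v'.2 t := fun t ht =>
    Prod.ext_iff.1 (congrFun h ⟨(t, t₂), mem_product.2 ⟨mem_compl.2 ht, ht₂⟩⟩)
  have hsub : ∀ x y : Fin m → ZMod 2, (∀ t ∉ deltaC M, dotp x t = dotp y t) → x = y :=
    fun x y hxy => sub_eq_zero.1 <| eq_zero_of_forall_not_mem_deltaC_dotp_eq_zero hM fun t ht => by
      rw [dotp_eq_dotProduct, sub_dotProduct, sub_eq_zero]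
      exact hxy t ht
  exact Prod.ext (hsub _ _ fun t ht => (hcoord t ht).1) (hsub _ _ fun t ht => (hcoord t ht).2)

end

theorem stmt_1_general {m : ℕ} (M N : Finset (Fin m))
    (hMu : M ≠ Finset.univ)
    (Ds : Finset ((Fin m → ZMod 2) × (Fin m → ZMod 2)))
    (hDs : Ds = (deltaC M)ᶜ ×ˢ deltaC N) :
    Ds.card = (2 ^ m - 2 ^ M.card) * 2 ^ N.card ∧
    ((Finset.univ : Finset ((Fin m → ZMod 2) × (Fin m → ZMod 2))).image (cwL Ds)).card = 2 ^ (2 * m) ∧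
    (Finset.univ : Finset ((Fin m → ZMod 2) × (Fin m → ZMod 2))).val.map (fun v => hammingNorm (gcwL Ds v)) =
      Multiset.replicate (2 ^ (2 * m - 2 * M.card) - 2 ^ (m - M.card + 1) + 1)
          (2 ^ (m + N.card)) +
      Multiset.replicate (2 ^ (m - M.card + 1) - 2)
          (2 ^ (m + N.card - 1)) +
      Multiset.replicate (2 ^ (2 * m) + 2 ^ (2 * m - 2 * M.card) - 2 ^ (2 * m - M.card + 1))
          (2 ^ (m + N.card) - 2 ^ (M.card + N.card)) +
      Multiset.replicate (2 ^ (2 * m - M.card + 1) + 2 ^ (m - M.card + 1) - 2 ^ (2 * m - 2 * M.card + 1) - 2 ^ (m + 1))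
          (2 ^ (m + N.card) - 2 ^ (M.card + N.card - 1)) +
      Multiset.replicate (2 ^ (m + 1) - 2 ^ (m - M.card + 1))
          (2 ^ (m + N.card - 1) - 2 ^ (M.card + N.card - 1)) +
      Multiset.replicate (1)
          (0) := by
  subst hDs
  have hkm : #M < m := by simpa using card_lt_card (ssubset_univ_iff.2 hMu)
  have hcard : Fintype.card (Fin m → ZMod 2) = 2 ^ m := by simp
  refine ⟨?_, ?_, ?_⟩
  · rw [card_product, card_compl, card_deltaC, card_deltaC, hcard]
  · rw [card_image_of_injective _ (cwL_injective hMu ⟨0, zero_mem_deltaC N⟩), card_univ,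
      Fintype.card_prod, hcard, ← pow_add, two_mul]
  · rw [map_hammingNorm_gcwL_product, map_binWeight_compl_deltaC, map_mul_add_product_three,
      card_deltaC]
    obtain ⟨hAA, hA, hBB, hAB, hB⟩ := lee_weight_multiplicities hkm
    obtain ⟨vAA, vA⟩ := lee_weights #N (Nat.one_le_of_lt hkm)
    have vB : ∀ a, a * (2 ^ (m - #M) * (2 ^ #M - 1)) ≠ 0 → _ := fun a h =>
      lee_weights_of_pos #N (Nat.one_le_iff_ne_zero.2 fun hk0 => h (by simp [hk0])) hkm.le
    refine congrArg₂ (· + ·) (congrArg₂ (· + ·) (congrArg₂ (· + ·) (congrArg₂ (· + ·)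
      (congrArg₂ (· + ·) ?_ ?_) ?_) ?_) ?_) rfl
    · exact Multiset.replicate_congr hAA fun _ => vAA
    · exact Multiset.replicate_congr hA fun _ => vA
    · exact Multiset.replicate_congr hBB fun h => (vB _ h).1
    · exact Multiset.replicate_congr hAB fun h => (vB _ h).2.1
    · exact Multiset.replicate_congr hB fun h => (vB _ h).2.2

theorem stmt_1 {m : ℕ} (hm : 1 ≤ m) (M N : Finset (Fin m))
    (hMu : M ≠ Finset.univ) (hMN : 1 ≤ M.card + N.card)
    (Ds : Finset ((Fin m → ZMod 2) × (Fin m → ZMod 2)))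
    (hDs : Ds = (deltaC M)ᶜ ×ˢ deltaC N) :
    Ds.card = (2 ^ m - 2 ^ M.card) * 2 ^ N.card ∧
    ((Finset.univ : Finset ((Fin m → ZMod 2) × (Fin m → ZMod 2))).image (cwL Ds)).card = 2 ^ (2 * m) ∧
    (Finset.univ : Finset ((Fin m → ZMod 2) × (Fin m → ZMod 2))).val.map (fun v => hammingNorm (gcwL Ds v)) =
      Multiset.replicate (2 ^ (2 * m - 2 * M.card) - 2 ^ (m - M.card + 1) + 1)
          (2 ^ (m + N.card)) +
      Multiset.replicate (2 ^ (m - M.card + 1) - 2)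
          (2 ^ (m + N.card - 1)) +
      Multiset.replicate (2 ^ (2 * m) + 2 ^ (2 * m - 2 * M.card) - 2 ^ (2 * m - M.card + 1))
          (2 ^ (m + N.card) - 2 ^ (M.card + N.card)) +
      Multiset.replicate (2 ^ (2 * m - M.card + 1) + 2 ^ (m - M.card + 1) - 2 ^ (2 * m - 2 * M.card + 1) - 2 ^ (m + 1))
          (2 ^ (m + N.card) - 2 ^ (M.card + N.card - 1)) +
      Multiset.replicate (2 ^ (m + 1) - 2 ^ (m - M.card + 1))
          (2 ^ (m + N.card - 1) - 2 ^ (M.card + N.card - 1)) +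
      Multiset.replicate (1)
          (0) :=
  stmt_1_general M N hMu Ds hDs
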